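/- arXiv:2603.18434 — 3 statements merged into one kernel-verified Lean document; each statement's English description precedes it below -/
import Mathlib

section
/- Virial theorem, periodic version: let q(t) be a periodic solution of Newton's N-body equations defined on all of ℝ with period T > 0 and total energy E. Then E < 0, and writing E = −h with h > 0, the time averages over one period satisfy (1/T)∫₀^T U(q(t)) dt = 2h and (1/T)∫₀^T K(t) dt = h. -/
open Finset Filter MeasureTheory
open scoped RealInnerProductSpace

noncomputable section

/-- Configuration space of `N` bodies in `ℝ³`. -/
abbrev Config (N : ℕ) := Fin N → EuclideanSpace ℝ (Fin 3)

/-- A configuration is collision-free if all bodies occupy distinct positions. -/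
def CollisionFree {N : ℕ} (q : Config N) : Prop :=
  ∀ a b : Fin N, a ≠ b → q a ≠ q b

/-- The Newtonian potential `U(q) = G ∑_{a<b} m_a m_b / |q_a - q_b|`. -/
def potU {N : ℕ} (G : ℝ) (m : Fin N → ℝ) (q : Config N) : ℝ :=
  G * ∑ a : Fin N, ∑ b : Fin N, if a < b then m a * m b / ‖q a - q b‖ else 0

/-- Kinetic energy `K = (1/2) ∑_a m_a |v_a|²`. -/
def kinE {N : ℕ} (m : Fin N → ℝ) (v : Config N) : ℝ :=
  (1 / 2) * ∑ a : Fin N, m a * ‖v a‖ ^ 2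

/-- Moment of inertia `I = ∑_a m_a |q_a|²`. -/
def momI {N : ℕ} (m : Fin N → ℝ) (q : Config N) : ℝ :=
  ∑ a : Fin N, m a * ‖q a‖ ^ 2

/-- `q, v : ℝ → Config N` is a solution of Newton's N-body equations on `J`:
at each time in `J` the configuration is collision-free, `v` is the derivative
of `q`, and the acceleration satisfies
`m_a q̈_a = G ∑_{b ≠ a} m_a m_b (q_b - q_a)/|q_b - q_a|³`. -/
def IsSolutionOn {N : ℕ} (G : ℝ) (m : Fin N → ℝ) (J : Set ℝ)
    (q v : ℝ → Config N) : Prop :=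
  ∀ t ∈ J,
    CollisionFree (q t) ∧
    (∀ a, HasDerivAt (fun s => q s a) (v t a) t) ∧
    (∀ a, ∃ acc : EuclideanSpace ℝ (Fin 3),
      HasDerivAt (fun s => v s a) acc t ∧
      m a • acc = ∑ b ∈ univ.filter (fun b => b ≠ a),
        (G * m a * m b / ‖q t b - q t a‖ ^ 3) • (q t b - q t a))

/-!
The virial `Σ_a m_a ⟪q_a, q̇_a⟫` (half the derivative of the moment of inertia) has derivative
`2K - U`, because the potential is homogeneous of degree `-1`, so that Euler's identity gives
`Σ_a ⟪q_a, F_a⟫ = -U` for the Newtonian forces `F_a`. Along a periodic orbit the virial is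
periodic, so the time average of `2K - U` vanishes; with `K - U = E` this gives `⟨K⟩ = -E` and
`⟨U⟩ = -2E`, and `U > 0` forces `E < 0`.
-/

theorem inner_sub_add_inner_sub_eq_neg_norm_sub_sq {E : Type*} [NormedAddCommGroup E]
    [InnerProductSpace ℝ E] (x y : E) :
    ⟪x, y - x⟫ + ⟪y, x - y⟫ = -‖x - y‖ ^ 2 := by
  simp only [inner_sub_right, real_inner_self_eq_norm_sq, norm_sub_sq_real, real_inner_comm x y]
  ring

theorem sum_sum_mul_inner_sub_eq {ι E : Type*} [Fintype ι] [NormedAddCommGroup E]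
    [InnerProductSpace ℝ E] (c : ι → ι → ℝ) (hc : ∀ a b, c a b = c b a) (x : ι → E) :
    2 * ∑ a, ∑ b, c a b * ⟪x a, x b - x a⟫ = -∑ a, ∑ b, c a b * ‖x a - x b‖ ^ 2 := by
  have hswap : ∑ a, ∑ b, c a b * ⟪x a, x b - x a⟫ = ∑ a, ∑ b, c a b * ⟪x b, x a - x b⟫ := by
    rw [Finset.sum_comm]
    simp only [hc]
  rw [two_mul]
  nth_rw 2 [hswap]
  simp only [← Finset.sum_add_distrib, ← mul_add, inner_sub_add_inner_sub_eq_neg_norm_sub_sq,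
    mul_neg, Finset.sum_neg_distrib]

theorem sum_sum_eq_two_mul_sum_sum_ite_lt {ι : Type*} [Fintype ι] [LinearOrder ι]
    (f : ι → ι → ℝ) (hf : ∀ a b, f a b = f b a) (hdiag : ∀ a, f a a = 0) :
    ∑ a, ∑ b, f a b = 2 * ∑ a, ∑ b, if a < b then f a b else 0 := by
  have hsplit : ∀ a b, f a b = (if a < b then f a b else 0) + (if b < a then f b a else 0) := by
    intro a b
    rcases lt_trichotomy a b with h | rfl | h
    · simp [h, h.not_gt]
    · simp [hdiag]
    · simp [h, h.not_gt, hf a b]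
  rw [Finset.sum_congr rfl fun a _ => Finset.sum_congr rfl fun b _ => hsplit a b]
  simp only [Finset.sum_add_distrib]
  rw [Finset.sum_comm (f := fun a b => if b < a then f b a else 0), two_mul]

def newtonForce {N : ℕ} (G : ℝ) (m : Fin N → ℝ) (q : Config N) (a : Fin N) :
    EuclideanSpace ℝ (Fin 3) :=
  ∑ b ∈ univ.filter (fun b => b ≠ a), (G * m a * m b / ‖q b - q a‖ ^ 3) • (q b - q a)

-- At a collision, `x / 0 = 0` drops the colliding pair from both sides.
theorem sum_inner_newtonForce {N : ℕ} (G : ℝ) (m : Fin N → ℝ) (q : Config N) :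
    ∑ a, ⟪q a, newtonForce G m q a⟫ = -potU G m q := by
  set c : Fin N → Fin N → ℝ := fun a b => G * m a * m b / ‖q a - q b‖ ^ 3
  have hforce : ∀ a, ⟪q a, newtonForce G m q a⟫ = ∑ b, c a b * ⟪q a, q b - q a⟫ := by
    intro a
    rw [newtonForce, Finset.sum_filter, inner_sum]
    refine Finset.sum_congr rfl fun b _ => ?_
    split_ifs with hba
    · rw [real_inner_smul_right, norm_sub_rev]
    · simp [of_not_not hba]
  have hpot : ∀ a b, c a b * ‖q a - q b‖ ^ 2 = G * (m a * m b / ‖q a - q b‖) := by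
    intro a b
    rcases eq_or_ne ‖q a - q b‖ 0 with h | h
    · simp [c, h]
    · simp only [c]
      field_simp
  have hU : ∑ a, ∑ b, c a b * ‖q a - q b‖ ^ 2 = 2 * potU G m q := by
    simp only [hpot, ← Finset.mul_sum]
    rw [potU, sum_sum_eq_two_mul_sum_sum_ite_lt _ (fun a b => ?_) (fun a => by simp)]
    · ring
    · rw [norm_sub_rev, mul_comm (m a)]
  have hpairs := sum_sum_mul_inner_sub_eq c (fun a b => by simp only [c]; rw [norm_sub_rev]; ring) q
  simp only [hforce]
  linarith

def virial {N : ℕ} (m : Fin N → ℝ) (q v : Config N) : ℝ :=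
  ∑ a, m a * ⟪q a, v a⟫

theorem IsSolutionOn.hasDerivAt_virial {N : ℕ} {G : ℝ} {m : Fin N → ℝ} {J : Set ℝ}
    {q v : ℝ → Config N} (hsol : IsSolutionOn G m J q v) {t : ℝ} (ht : t ∈ J) :
    HasDerivAt (fun s => virial m (q s) (v s)) (2 * kinE m (v t) - potU G m (q t)) t := by
  obtain ⟨-, hq, hv⟩ := hsol t ht
  choose acc hacc hnewton using hv
  have hterm : ∀ a, m a * (⟪q t a, acc a⟫ + ⟪v t a, v t a⟫)
      = ⟪q t a, newtonForce G m (q t) a⟫ + m a * ‖v t a‖ ^ 2 := by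
    intro a
    rw [newtonForce, ← hnewton, real_inner_smul_right, real_inner_self_eq_norm_sq]
    ring
  refine (HasDerivAt.fun_sum fun a (_ : a ∈ univ) =>
    ((hq a).inner ℝ (hacc a)).const_mul (m a)).congr_deriv ?_
  simp only [hterm, Finset.sum_add_distrib, sum_inner_newtonForce, kinE]
  ring

theorem Function.Periodic.periodic_of_hasDerivAt {𝕜 F : Type*} [NontriviallyNormedField 𝕜]
    [NormedAddCommGroup F] [NormedSpace 𝕜 F] {f f' : 𝕜 → F} {c : 𝕜}
    (hf : Function.Periodic f c) (hf' : ∀ x, HasDerivAt f (f' x) x) :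
    Function.Periodic f' c := by
  intro x
  have hshift := (hf' (x + c)).comp_add_const x c
  rw [show (fun y => f (y + c)) = f from funext hf] at hshift
  exact hshift.unique (hf' x)

theorem potU_pos {N : ℕ} (hN : 2 ≤ N) {G : ℝ} (hG : 0 < G) {m : Fin N → ℝ}
    (hm : ∀ a, 0 < m a) {q : Config N} (hq : CollisionFree q) : 0 < potU G m q := by
  have hnonneg : ∀ a b : Fin N, 0 ≤ if a < b then m a * m b / ‖q a - q b‖ else 0 := by
    intro a b
    split_ifs
    · exact div_nonneg (mul_nonneg (hm a).le (hm b).le) (norm_nonneg _)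
    · exact le_rfl
  let i : Fin N := ⟨0, by omega⟩
  let j : Fin N := ⟨1, by omega⟩
  have hij : i < j := Fin.mk_lt_mk.mpr zero_lt_one
  refine mul_pos hG (Finset.sum_pos' (fun a _ => Finset.sum_nonneg fun b _ => hnonneg a b)
    ⟨i, mem_univ _, Finset.sum_pos' (fun b _ => hnonneg i b) ⟨j, mem_univ _, ?_⟩⟩)
  rw [if_pos hij]
  exact div_pos (mul_pos (hm i) (hm j)) (norm_pos_iff.mpr (sub_ne_zero.mpr (hq i j hij.ne)))

theorem IsSolutionOn.continuous_velocity {N : ℕ} {G : ℝ} {m : Fin N → ℝ} {q v : ℝ → Config N}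
    (hsol : IsSolutionOn G m Set.univ q v) : Continuous v :=
  continuous_pi fun a => continuous_iff_continuousAt.mpr fun t =>
    ((hsol t trivial).2.2 a).choose_spec.1.continuousAt

theorem continuous_kinE {N : ℕ} (m : Fin N → ℝ) : Continuous (kinE m) := by
  unfold kinE
  fun_prop

/-- Virial theorem, periodic version: a periodic solution of the
N-body problem has negative energy `E = -h`, and the time averages over one
period satisfy `⟨U⟩ = 2h` and `⟨K⟩ = h`. -/
theorem virial_periodic
    (N : ℕ) (hN : 2 ≤ N) (G : ℝ) (hG : 0 < G)
    (m : Fin N → ℝ) (hm : ∀ a, 0 < m a)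
    (q v : ℝ → Config N)
    (hsol : IsSolutionOn G m Set.univ q v)
    (T : ℝ) (hT : 0 < T) (hper : ∀ t : ℝ, q (t + T) = q t)
    (E : ℝ) (hE : ∀ t : ℝ, kinE m (v t) - potU G m (q t) = E) :
    E < 0 ∧
    (1 / T) * (∫ t in (0:ℝ)..T, potU G m (q t)) = 2 * (-E) ∧
    (1 / T) * (∫ t in (0:ℝ)..T, kinE m (v t)) = -E := by
  have hv_per : Function.Periodic v T :=
    Function.Periodic.periodic_of_hasDerivAt hper fun t => hasDerivAt_pi.mpr (hsol t trivial).2.1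
  have hK_int : IntervalIntegrable (fun t => kinE m (v t)) volume 0 T :=
    ((continuous_kinE m).comp hsol.continuous_velocity).intervalIntegrable 0 T
  -- Energy conservation turns `2K - U`, the derivative of the virial, into `K + E`.
  have hvirial : ∀ t, HasDerivAt (fun s => virial m (q s) (v s)) (kinE m (v t) + E) t := by
    intro t
    convert (hsol.hasDerivAt_virial (Set.mem_univ t)) using 1
    linarith [hE t]
  have hK : (∫ t in (0:ℝ)..T, kinE m (v t)) = -T * E := by
    have hFTC := intervalIntegral.integral_eq_sub_of_hasDerivAt (fun t _ => hvirial t)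
      (hK_int.add intervalIntegrable_const)
    have hvirial_per : virial m (q T) (v T) = virial m (q 0) (v 0) := by
      simpa using congr_arg₂ (virial m) (hper 0) (hv_per 0)
    rw [intervalIntegral.integral_add hK_int intervalIntegrable_const,
      intervalIntegral.integral_const, hvirial_per, sub_self, sub_zero, smul_eq_mul] at hFTC
    linarith
  have hU_eq : (fun t => potU G m (q t)) = fun t => kinE m (v t) - E :=
    funext fun t => by linarith [hE t]
  have hU : (∫ t in (0:ℝ)..T, potU G m (q t)) = -2 * T * E := by
    rw [hU_eq, intervalIntegral.integral_sub hK_int intervalIntegrable_const,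
      intervalIntegral.integral_const, hK]
    simp only [sub_zero, smul_eq_mul]
    ring
  have hU_pos : 0 < ∫ t in (0:ℝ)..T, potU G m (q t) := by
    refine intervalIntegral.intervalIntegral_pos_of_pos_on ?_
      (fun t _ => potU_pos hN hG hm (hsol t trivial).1) hT
    rw [hU_eq]
    exact hK_int.sub intervalIntegrable_const
  refine ⟨by nlinarith, ?_, ?_⟩
  · rw [hU]; field_simp
  · rw [hK]; field_simp
end
end

section
/- Virial theorem for parabolic solutions: let q(t) be a solution of Newton's N-body equations defined for all t ∈ ℝ with total energy E = 0 and satisfying I(t) = O(t^{4/3}) as t → ±∞ (i.e., there exist constants C > 0 and T₀ > 0 with I(t) ≤ C·|t|^{4/3} for |t| ≥ T₀). Then the time averages ⟨K⟩ = lim_{T→∞} (1/(2T))∫_{−T}^{T} K(t) dt and ⟨U⟩ = lim_{T→∞} (1/(2T))∫_{−T}^{T} U(q(t)) dt exist and ⟨K⟩ = ⟨U⟩ = 0. -/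
/-!
By the Lagrange–Jacobi identity, `Ï = 4K - 2U`, which equals `2K ≥ 0` at zero energy, so `I` is
convex and `∫_{-T}^{T} 2K = İ(T) - İ(-T)`. Convexity bounds `T·İ(T) ≤ I(2T) - I(T) ≤ I(2T)` and
`-T·İ(-T) ≤ I(-2T)`, hence the time average of `K` over `[-T, T]` is `O(T^{4/3} / T²) → 0`;
`U = K` along the solution.
-/

open Finset Filter MeasureTheory
open scoped RealInnerProductSpace

noncomputable section

section ConvexGrowth

variable {f f' f'' : ℝ → ℝ}

theorem integral_eq_sub_of_hasDerivAt_of_nonneg (hf' : ∀ t, HasDerivAt f' (f'' t) t)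
    (hf'' : ∀ t, 0 ≤ f'' t) (a b : ℝ) : ∫ t in a..b, f'' t = f' b - f' a :=
  intervalIntegral.integral_eq_sub_of_hasDerivAt (fun t _ => hf' t) <|
    intervalIntegral.intervalIntegrable_deriv_of_nonneg
      (fun t _ => (hf' t).continuousAt.continuousWithinAt) (fun t _ => hf' t) (fun t _ => hf'' t)

theorem convexOn_univ_of_hasDerivAt2_nonneg (hf : ∀ t, HasDerivAt f (f' t) t)
    (hf' : ∀ t, HasDerivAt f' (f'' t) t) (hf'' : ∀ t, 0 ≤ f'' t) : ConvexOn ℝ Set.univ f :=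
  convexOn_of_hasDerivWithinAt2_nonneg convex_univ
    (fun t _ => (hf t).continuousAt.continuousWithinAt)
    (fun t _ => (hf t).hasDerivWithinAt) (fun t _ => (hf' t).hasDerivWithinAt) (fun t _ => hf'' t)

theorem integral_symm_le_of_hasDerivAt2_nonneg (hf : ∀ t, HasDerivAt f (f' t) t)
    (hf' : ∀ t, HasDerivAt f' (f'' t) t) (hf'' : ∀ t, 0 ≤ f'' t) (hf0 : ∀ t, 0 ≤ f t)
    {T : ℝ} (hT : 0 < T) : T * ∫ t in (-T)..T, f'' t ≤ f (2 * T) + f (-(2 * T)) := by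
  have hconv := convexOn_univ_of_hasDerivAt2_nonneg hf hf' hf''
  have hright : f' T ≤ slope f T (2 * T) :=
    hconv.le_slope_of_hasDerivAt trivial trivial (by linarith) (hf T)
  have hleft : slope f (-(2 * T)) (-T) ≤ f' (-T) :=
    hconv.slope_le_of_hasDerivAt trivial trivial (by linarith) (hf (-T))
  rw [slope_def_field, le_div_iff₀ (by linarith)] at hright
  rw [slope_def_field, div_le_iff₀ (by linarith)] at hleft
  rw [integral_eq_sub_of_hasDerivAt_of_nonneg hf' hf'']
  nlinarith [hf0 T, hf0 (-T)]

theorem tendsto_average_of_hasDerivAt2_nonneg {p C T₀ : ℝ} (hp : p < 2)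
    (hf : ∀ t, HasDerivAt f (f' t) t) (hf' : ∀ t, HasDerivAt f' (f'' t) t)
    (hf'' : ∀ t, 0 ≤ f'' t) (hf0 : ∀ t, 0 ≤ f t) (hgrowth : ∀ t, T₀ ≤ |t| → f t ≤ C * |t| ^ p) :
    Tendsto (fun T => 1 / (2 * T) * ∫ t in (-T)..T, f'' t) atTop (nhds 0) := by
  have hbound : Tendsto (fun T : ℝ => C * 2 ^ p * T ^ (-(2 - p))) atTop (nhds 0) := by
    simpa using (tendsto_rpow_neg_atTop (sub_pos.mpr hp)).const_mul (C * 2 ^ p)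
  refine squeeze_zero' ?_ ?_ hbound
  · filter_upwards [eventually_ge_atTop 0] with T hT
    exact mul_nonneg (by positivity)
      (intervalIntegral.integral_nonneg (by linarith) fun t _ => hf'' t)
  · filter_upwards [eventually_ge_atTop (max T₀ 1)] with T hT
    have hT1 : 1 ≤ T := le_of_max_le_right hT
    have hT0 : 0 < T := by linarith
    have h2T : |2 * T| = 2 * T := abs_of_pos (by linarith)
    have hgrowth₂ : f (2 * T) + f (-(2 * T)) ≤ 2 * (C * (2 * T) ^ p) := by
      have hplus := hgrowth (2 * T) (by rw [h2T]; linarith [le_of_max_le_left hT])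
      have hminus := hgrowth (-(2 * T)) (by rw [abs_neg, h2T]; linarith [le_of_max_le_left hT])
      rw [abs_neg, h2T] at hminus
      rw [h2T] at hplus
      linarith
    have hpow : (2 * T) ^ p = 2 ^ p * T ^ (-(2 - p)) * T ^ 2 := by
      rw [Real.mul_rpow (by norm_num) hT0.le, mul_assoc, ← Real.rpow_natCast,
        ← Real.rpow_add hT0]
      norm_num
    have hint := integral_symm_le_of_hasDerivAt2_nonneg hf hf' hf'' hf0 hT0
    rw [div_mul_eq_mul_div, one_mul, div_le_iff₀ (by positivity)]
    refine le_of_mul_le_mul_left ?_ hT0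
    calc T * ∫ t in (-T)..T, f'' t ≤ 2 * (C * (2 * T) ^ p) := hint.trans hgrowth₂
      _ = T * (C * 2 ^ p * T ^ (-(2 - p)) * (2 * T)) := by rw [hpow]; ring

end ConvexGrowth

section PairSums

variable {ι : Type*} [Fintype ι] [DecidableEq ι]

theorem sum_sum_ne_comm {M : Type*} [AddCommMonoid M] (w : ι → ι → M) :
    ∑ a, ∑ b ∈ univ.filter (fun b => b ≠ a), w a b
      = ∑ a, ∑ b ∈ univ.filter (fun b => b ≠ a), w b a := by
  simp only [Finset.sum_filter]
  rw [Finset.sum_comm]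
  simp only [ne_comm]

theorem sum_sum_ne_eq_two_mul_sum_sum_lt [LinearOrder ι] {R : Type*} [NonAssocSemiring R]
    (w : ι → ι → R) (hw : ∀ a b, w a b = w b a) :
    ∑ a, ∑ b ∈ univ.filter (fun b => b ≠ a), w a b
      = 2 * ∑ a, ∑ b, if a < b then w a b else 0 := by
  have hsplit : ∀ a, ∑ b ∈ univ.filter (fun b => b ≠ a), w a b
      = (∑ b, if a < b then w a b else 0) + ∑ b, if b < a then w b a else 0 := by
    intro a
    rw [Finset.sum_filter, ← Finset.sum_add_distrib]
    refine Finset.sum_congr rfl fun b _ => ?_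
    rcases lt_trichotomy a b with h | rfl | h
    · simp [h.ne', h, h.not_gt]
    · simp
    · simp [h.ne, h, h.not_gt, hw a b]
  rw [Finset.sum_congr rfl fun a _ => hsplit a, Finset.sum_add_distrib, Finset.sum_comm (γ := ι),
    two_mul]

variable {E : Type*} [NormedAddCommGroup E] [InnerProductSpace ℝ E]

theorem inner_sub_add_inner_sub (x y : E) : ⟪x, y - x⟫ + ⟪y, x - y⟫ = -‖x - y‖ ^ 2 := by
  have h := real_inner_self_eq_norm_sq (x - y)
  simp only [inner_sub_left, inner_sub_right, real_inner_comm x y] at h ⊢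
  linarith

theorem two_mul_sum_inner_pairForce (c : ι → ι → ℝ) (hc : ∀ a b, c a b = c b a) (x : ι → E) :
    2 * ∑ a, ⟪x a, ∑ b ∈ univ.filter (fun b => b ≠ a), c a b • (x b - x a)⟫
      = -∑ a, ∑ b ∈ univ.filter (fun b => b ≠ a), c a b * ‖x a - x b‖ ^ 2 := by
  calc 2 * ∑ a, ⟪x a, ∑ b ∈ univ.filter (fun b => b ≠ a), c a b • (x b - x a)⟫
      = ∑ a, ∑ b ∈ univ.filter (fun b => b ≠ a),
          c a b * (⟪x a, x b - x a⟫ + ⟪x b, x a - x b⟫) := by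
        simp only [inner_sum, real_inner_smul_right, mul_add, Finset.sum_add_distrib]
        rw [two_mul]
        nth_rewrite 2 [sum_sum_ne_comm]
        simp only [hc]
    _ = _ := by simp [inner_sub_add_inner_sub]

end PairSums

section NBody

variable {N : ℕ} {G : ℝ} {m : Fin N → ℝ}

theorem sum_inner_newtonForce_s8 {q : Config N} (hq : CollisionFree q) :
    ∑ a, ⟪q a, ∑ b ∈ univ.filter (fun b => b ≠ a),
        (G * m a * m b / ‖q b - q a‖ ^ 3) • (q b - q a)⟫ = -potU G m q := by
  have hvirial := two_mul_sum_inner_pairForce (fun a b => G * m a * m b / ‖q b - q a‖ ^ 3)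
    (fun a b => by rw [norm_sub_rev]; ring) q
  have hpair : ∀ a, ∀ b ∈ univ.filter (fun b => b ≠ a),
      G * m a * m b / ‖q b - q a‖ ^ 3 * ‖q a - q b‖ ^ 2 = G * (m a * m b / ‖q a - q b‖) := by
    intro a b hb
    have hr : ‖q a - q b‖ ≠ 0 :=
      norm_ne_zero_iff.mpr (sub_ne_zero.mpr (hq a b (Finset.mem_filter.mp hb).2.symm))
    rw [norm_sub_rev]
    field_simp
  rw [Finset.sum_congr rfl fun a _ => Finset.sum_congr rfl (hpair a)] at hvirial
  simp only [← Finset.mul_sum] at hvirial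
  rw [sum_sum_ne_eq_two_mul_sum_sum_lt _ (fun a b => by rw [norm_sub_rev]; ring)] at hvirial
  rw [potU]
  linarith

theorem kinE_nonneg (hm : ∀ a, 0 ≤ m a) (v : Config N) : 0 ≤ kinE m v :=
  mul_nonneg (by norm_num) (Finset.sum_nonneg fun a _ => mul_nonneg (hm a) (sq_nonneg _))

theorem momI_nonneg (hm : ∀ a, 0 ≤ m a) (q : Config N) : 0 ≤ momI m q :=
  Finset.sum_nonneg fun a _ => mul_nonneg (hm a) (sq_nonneg _)

def dilation (m : Fin N → ℝ) (q v : Config N) : ℝ :=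
  ∑ a, m a * ⟪q a, v a⟫

theorem hasDerivAt_momI {q : ℝ → Config N} {v : Config N} {t : ℝ}
    (hq : ∀ a, HasDerivAt (fun s => q s a) (v a) t) :
    HasDerivAt (fun s => momI m (q s)) (2 * dilation m (q t) v) t := by
  simp only [momI, dilation, ← real_inner_self_eq_norm_sq, Finset.mul_sum]
  refine HasDerivAt.fun_sum fun a _ => ?_
  refine (((hq a).inner ℝ (hq a)).const_mul (m a)).congr_deriv ?_
  rw [real_inner_comm (v a)]
  ring

/-- The Lagrange–Jacobi identity. -/
theorem IsSolutionOn.hasDerivAt_dilation {J : Set ℝ} {q v : ℝ → Config N}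
    (hsol : IsSolutionOn G m J q v) {t : ℝ} (ht : t ∈ J) :
    HasDerivAt (fun s => dilation m (q s) (v s)) (2 * kinE m (v t) - potU G m (q t)) t := by
  obtain ⟨hcf, hq, hv⟩ := hsol t ht
  choose acc hacc hnewton using hv
  have hderiv : HasDerivAt (fun s => dilation m (q s) (v s))
      (∑ a, (⟪q t a, m a • acc a⟫ + m a * ‖v t a‖ ^ 2)) t := by
    refine HasDerivAt.fun_sum fun a _ => ?_
    refine (((hq a).inner ℝ (hacc a)).const_mul (m a)).congr_deriv ?_
    rw [real_inner_smul_right, real_inner_self_eq_norm_sq]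
    ring
  convert hderiv using 1
  simp only [Finset.sum_add_distrib, hnewton]
  rw [sum_inner_newtonForce_s8 hcf, kinE]
  ring

end NBody

theorem virial_parabolic_general
    (N : ℕ) (G : ℝ)
    (m : Fin N → ℝ) (hm : ∀ a, 0 < m a)
    (q v : ℝ → Config N)
    (hsol : IsSolutionOn G m Set.univ q v)
    (hE : ∀ t : ℝ, kinE m (v t) - potU G m (q t) = 0)
    (hI : ∃ C > (0:ℝ), ∃ T₀ > (0:ℝ), ∀ t : ℝ, T₀ ≤ |t| →
      momI m (q t) ≤ C * |t| ^ ((4:ℝ) / 3)) :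
    Tendsto (fun T : ℝ => (1 / (2 * T)) * ∫ t in (-T)..T, kinE m (v t))
      atTop (nhds 0) ∧
    Tendsto (fun T : ℝ => (1 / (2 * T)) * ∫ t in (-T)..T, potU G m (q t))
      atTop (nhds 0) := by
  obtain ⟨C, -, T₀, -, hgrowth⟩ := hI
  have hUK : ∀ t, potU G m (q t) = kinE m (v t) := fun t => (sub_eq_zero.mp (hE t)).symm
  have hm0 : ∀ a, 0 ≤ m a := fun a => (hm a).le
  have hK : Tendsto (fun T : ℝ => (1 / (2 * T)) * ∫ t in (-T)..T, kinE m (v t))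
      atTop (nhds 0) := by
    refine tendsto_average_of_hasDerivAt2_nonneg (f := fun t => momI m (q t) / 2)
      (f' := fun t => dilation m (q t) (v t)) (p := 4 / 3) (C := C / 2) (T₀ := T₀) (by norm_num)
      (fun t => ?_) (fun t => ?_) (fun t => kinE_nonneg hm0 _)
      (fun t => div_nonneg (momI_nonneg hm0 _) two_pos.le) (fun t ht => ?_)
    · simpa using (hasDerivAt_momI (hsol t (Set.mem_univ t)).2.1).div_const 2
    · simpa [hUK t, two_mul] using hsol.hasDerivAt_dilation (Set.mem_univ t)
    · linarith [hgrowth t ht]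
  exact ⟨hK, by simpa only [hUK] using hK⟩

/-- Virial theorem for parabolic solutions: if a solution defined
for all time has zero energy and `I(t) = O(t^{4/3})` as `t → ±∞`, then the time
averages of `K` and `U` exist and `⟨K⟩ = ⟨U⟩ = 0`. -/
theorem virial_parabolic
    (N : ℕ) (hN : 2 ≤ N) (G : ℝ) (hG : 0 < G)
    (m : Fin N → ℝ) (hm : ∀ a, 0 < m a)
    (q v : ℝ → Config N)
    (hsol : IsSolutionOn G m Set.univ q v)
    (hE : ∀ t : ℝ, kinE m (v t) - potU G m (q t) = 0)
    (hI : ∃ C > (0:ℝ), ∃ T₀ > (0:ℝ), ∀ t : ℝ, T₀ ≤ |t| →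
      momI m (q t) ≤ C * |t| ^ ((4:ℝ) / 3)) :
    Tendsto (fun T : ℝ => (1 / (2 * T)) * ∫ t in (-T)..T, kinE m (v t))
      atTop (nhds 0) ∧
    Tendsto (fun T : ℝ => (1 / (2 * T)) * ∫ t in (-T)..T, potU G m (q t))
      atTop (nhds 0) :=
  virial_parabolic_general N G m hm q v hsol hE hI
end
end

section
/- Hill collar proposition: fix h > 0. There exist ε > 0 and τ > 0 such that no solution of Newton's N-body equations with total energy E = −h can satisfy h ≤ U(q(t)) ≤ h + ε for all t in an interval of length τ; equivalently, every energy −h solution that starts in the collar region {q : h ≤ U(q) ≤ h + ε} leaves that region within time τ. -/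
open Finset Filter MeasureTheory
open scoped RealInnerProductSpace

noncomputable section

private lemma cube_arith {δ u w d : ℝ} (hδ : 0 < δ) (hu : δ ≤ u) (hw : δ ≤ w)
    (hd : 0 ≤ d) (h1 : |u - w| ≤ d) :
    d / u ^ 3 + |w ^ 3 - u ^ 3| / (u ^ 3 * w ^ 3) * w ≤ 4 / δ ^ 3 * d := by
  have hu0 : 0 < u := lt_of_lt_of_le hδ hu
  have hw0 : 0 < w := lt_of_lt_of_le hδ hw
  have habs : |w ^ 3 - u ^ 3| ≤ d * (w ^ 2 + w * u + u ^ 2) := by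
    have e2 : |w ^ 3 - u ^ 3| = |w - u| * (w ^ 2 + w * u + u ^ 2) := by
      rw [show w ^ 3 - u ^ 3 = (w - u) * (w ^ 2 + w * u + u ^ 2) by ring, abs_mul,
        abs_of_pos (show (0:ℝ) < w ^ 2 + w * u + u ^ 2 by positivity)]
    rw [e2]
    exact mul_le_mul_of_nonneg_right (by rwa [abs_sub_comm]) (by positivity)
  have hδu : δ ^ 3 ≤ u ^ 3 := pow_le_pow_left₀ hδ.le hu 3
  have hδuuw : δ ^ 3 ≤ u ^ 2 * w := by
    have : δ * δ * δ ≤ u * u * w :=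
      mul_le_mul (mul_le_mul hu hu hδ.le hu0.le) hw hδ.le (by positivity)
    nlinarith [this]
  have hδuww : δ ^ 3 ≤ u * w ^ 2 := by
    have : δ * δ * δ ≤ u * w * w :=
      mul_le_mul (mul_le_mul hu hw hδ.le hu0.le) hw hδ.le (by positivity)
    nlinarith [this]
  have t1 : d / u ^ 3 ≤ 1 / δ ^ 3 * d := by
    rw [show (1:ℝ) / δ ^ 3 * d = d / δ ^ 3 by ring]
    exact div_le_div_of_nonneg_left hd (by positivity) hδu
  have t2 : |w ^ 3 - u ^ 3| / (u ^ 3 * w ^ 3) * w ≤ 3 / δ ^ 3 * d := by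
    rw [div_mul_eq_mul_div, show (3:ℝ) / δ ^ 3 * d = 3 * d / δ ^ 3 by ring,
      div_le_div_iff₀ (by positivity) (by positivity)]
    have key : δ ^ 3 * (w ^ 3 + u * w ^ 2 + u ^ 2 * w) ≤ 3 * (u ^ 3 * w ^ 3) := by
      have k1 : δ ^ 3 * w ^ 3 ≤ u ^ 3 * w ^ 3 :=
        mul_le_mul_of_nonneg_right hδu (by positivity)
      have k2 : δ ^ 3 * (u * w ^ 2) ≤ (u ^ 2 * w) * (u * w ^ 2) :=
        mul_le_mul_of_nonneg_right hδuuw (by positivity)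
      have k3 : δ ^ 3 * (u ^ 2 * w) ≤ (u * w ^ 2) * (u ^ 2 * w) :=
        mul_le_mul_of_nonneg_right hδuww (by positivity)
      nlinarith [k1, k2, k3]
    calc |w ^ 3 - u ^ 3| * w * δ ^ 3 ≤ d * (w ^ 2 + w * u + u ^ 2) * w * δ ^ 3 := by
          apply mul_le_mul_of_nonneg_right _ (by positivity)
          exact mul_le_mul_of_nonneg_right habs hw0.le
      _ = d * (δ ^ 3 * (w ^ 3 + u * w ^ 2 + u ^ 2 * w)) := by ring
      _ ≤ d * (3 * (u ^ 3 * w ^ 3)) := mul_le_mul_of_nonneg_left key hd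
      _ = 3 * d * (u ^ 3 * w ^ 3) := by ring
  have : (1:ℝ) / δ ^ 3 * d + 3 / δ ^ 3 * d = 4 / δ ^ 3 * d := by ring
  linarith

lemma inv_cube_smul_lip {E : Type*} [NormedAddCommGroup E] [NormedSpace ℝ E]
    {δ : ℝ} (hδ : 0 < δ) {x y : E} (hx : δ ≤ ‖x‖) (hy : δ ≤ ‖y‖) :
    ‖(‖x‖ ^ 3)⁻¹ • x - (‖y‖ ^ 3)⁻¹ • y‖ ≤ 4 / δ ^ 3 * ‖x - y‖ := by
  have hx0 : (0:ℝ) < ‖x‖ := lt_of_lt_of_le hδ hx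
  have hy0 : (0:ℝ) < ‖y‖ := lt_of_lt_of_le hδ hy
  have key : (‖x‖ ^ 3)⁻¹ • x - (‖y‖ ^ 3)⁻¹ • y
      = (‖x‖ ^ 3)⁻¹ • (x - y) + ((‖x‖ ^ 3)⁻¹ - (‖y‖ ^ 3)⁻¹) • y := by
    rw [smul_sub, sub_smul]; abel
  rw [key]
  have h1 : ‖(‖x‖ ^ 3)⁻¹ • (x - y)‖ = ‖x - y‖ / ‖x‖ ^ 3 := by
    rw [norm_smul, Real.norm_eq_abs, abs_of_pos (show (0:ℝ) < (‖x‖ ^ 3)⁻¹ by positivity)]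
    ring
  have h2 : ‖((‖x‖ ^ 3)⁻¹ - (‖y‖ ^ 3)⁻¹) • y‖ = |‖y‖ ^ 3 - ‖x‖ ^ 3| / (‖x‖ ^ 3 * ‖y‖ ^ 3) * ‖y‖ := by
    rw [norm_smul, Real.norm_eq_abs]
    congr 1
    rw [show (‖x‖ ^ 3)⁻¹ - (‖y‖ ^ 3)⁻¹ = (‖y‖ ^ 3 - ‖x‖ ^ 3) / (‖x‖ ^ 3 * ‖y‖ ^ 3) by
      field_simp, abs_div, abs_of_pos (show (0:ℝ) < ‖x‖ ^ 3 * ‖y‖ ^ 3 by positivity)]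
  calc ‖(‖x‖ ^ 3)⁻¹ • (x - y) + ((‖x‖ ^ 3)⁻¹ - (‖y‖ ^ 3)⁻¹) • y‖
      ≤ ‖(‖x‖ ^ 3)⁻¹ • (x - y)‖ + ‖((‖x‖ ^ 3)⁻¹ - (‖y‖ ^ 3)⁻¹) • y‖ := norm_add_le _ _
    _ ≤ 4 / δ ^ 3 * ‖x - y‖ := by
        rw [h1, h2]
        exact cube_arith hδ hx hy (norm_nonneg _) (abs_norm_sub_norm_le x y)


def nbForce {N : ℕ} (G : ℝ) (m : Fin N → ℝ) (q : Config N) (a : Fin N) :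
    EuclideanSpace ℝ (Fin 3) :=
  ∑ b ∈ univ.filter (fun b => b ≠ a), (G * m a * m b / ‖q b - q a‖ ^ 3) • (q b - q a)

-- Step 1: existence of a close pair with large mutual term
lemma close_pair {N : ℕ} (hN : 2 ≤ N) {G : ℝ} (hG : 0 < G) (m : Fin N → ℝ)
    {h : ℝ} (hh : 0 < h) (q : Config N) (hU : h ≤ potU G m q) :
    ∃ a b : Fin N, a ≠ b ∧ h / (N:ℝ)^2 ≤ G * (m a * m b / ‖q a - q b‖) := by
  have hNpos : 0 < N := by omega
  haveI : Nonempty (Fin N) := ⟨⟨0, hNpos⟩⟩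
  have hNR : (0:ℝ) < (N:ℝ) := by exact_mod_cast hNpos
  by_contra hcon
  push_neg at hcon
  have hbound : ∀ a b : Fin N,
      (if a < b then m a * m b / ‖q a - q b‖ else 0) < h / (G * (N:ℝ)^2) := by
    intro a b
    split
    · next hab =>
      have := hcon a b (ne_of_lt hab)
      rw [lt_div_iff₀ (by positivity)]
      calc m a * m b / ‖q a - q b‖ * (G * (N:ℝ)^2)
          = G * (m a * m b / ‖q a - q b‖) * (N:ℝ)^2 := by ring
        _ < h / (N:ℝ)^2 * (N:ℝ)^2 := by
            apply mul_lt_mul_of_pos_right this (by positivity)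
        _ = h := by field_simp
    · positivity
  have hsum : ∑ a : Fin N, ∑ b : Fin N, (if a < b then m a * m b / ‖q a - q b‖ else 0)
      < h / G := by
    have inner_lt : ∀ a : Fin N,
        ∑ b : Fin N, (if a < b then m a * m b / ‖q a - q b‖ else 0)
          < (N:ℝ) * (h / (G * (N:ℝ)^2)) := by
      intro a
      calc ∑ b : Fin N, (if a < b then m a * m b / ‖q a - q b‖ else 0)
          < ∑ _b : Fin N, h / (G * (N:ℝ)^2) :=
            Finset.sum_lt_sum_of_nonempty univ_nonempty (fun b _ => hbound a b)
        _ = (N:ℝ) * (h / (G * (N:ℝ)^2)) := by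
            simp [Finset.sum_const, card_univ, nsmul_eq_mul]
    calc ∑ a : Fin N, ∑ b : Fin N, (if a < b then m a * m b / ‖q a - q b‖ else 0)
        < ∑ _a : Fin N, (N:ℝ) * (h / (G * (N:ℝ)^2)) :=
          Finset.sum_lt_sum_of_nonempty univ_nonempty (fun a _ => inner_lt a)
      _ = (N:ℝ) * ((N:ℝ) * (h / (G * (N:ℝ)^2))) := by
          simp [Finset.sum_const, card_univ, nsmul_eq_mul]
      _ = h / G := by field_simp
  have : potU G m q < h := by
    unfold potU
    calc G * ∑ a : Fin N, ∑ b : Fin N, (if a < b then m a * m b / ‖q a - q b‖ else 0)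
        < G * (h / G) := by exact mul_lt_mul_of_pos_left hsum hG
      _ = h := by field_simp
  linarith

-- Step 2: an empty annulus
lemma annulus_empty {N : ℕ} (hN : 2 ≤ N) {R S : ℝ} (hR : 0 < R) (hS : 1 ≤ S)
    (d : Fin N → ℝ) (a0 : Fin N) :
    ∃ j < N, ∀ b, b ≠ a0 → ¬(R * S^j < d b ∧ d b ≤ R * S^(j+1)) := by
  by_contra hcon
  push_neg at hcon
  choose g hg1 hg2 hg3 using hcon
  set g' : ℕ → Fin N := fun j => if hj : j < N then g j hj else a0 with hg'
  have key : ∀ i j : ℕ, i < N → j < N → i < j → g' i ≠ g' j := by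
    intro i j hi hj hij hne
    have e1 : d (g' i) ≤ R * S^(i+1) := by
      simp only [hg', dif_pos hi]; exact hg3 i hi
    have e2 : R * S^j < d (g' j) := by
      simp only [hg', dif_pos hj]; exact hg2 j hj
    have e3 : R * S^(i+1) ≤ R * S^j :=
      mul_le_mul_of_nonneg_left (pow_le_pow_right₀ hS (by omega)) hR.le
    rw [hne] at e1
    linarith
  have hmaps : ∀ j ∈ Finset.range N, g' j ∈ univ.filter (fun b => b ≠ a0) := by
    intro j hj
    rw [Finset.mem_range] at hj
    simp only [hg', dif_pos hj, mem_filter, mem_univ, true_and]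
    exact hg1 j hj
  have hinj : Set.InjOn g' (Finset.range N) := by
    intro i hi j hj hij
    rw [Finset.coe_range, Set.mem_Iio] at hi hj
    by_contra hne
    rcases lt_trichotomy i j with hlt | heq | hgt
    · exact key i j hi hj hlt hij
    · exact hne heq
    · exact key j i hj hi hgt hij.symm
  have hcard := Finset.card_le_card_of_injOn g' hmaps hinj
  have hfe : univ.filter (fun b => b ≠ a0) = univ.erase a0 := by
    ext b; simp [Finset.mem_erase, and_comm]
  rw [Finset.card_range, hfe, Finset.card_erase_of_mem (mem_univ _), card_univ,
    Fintype.card_fin] at hcard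
  omega

-- Step 3: Euler-type identity for the cluster force
lemma euler_identity {N : ℕ} (G : ℝ) (m : Fin N → ℝ) (q : Config N) (hq : CollisionFree q)
    (A : Finset (Fin N)) (p : EuclideanSpace ℝ (Fin 3)) :
    ∑ a ∈ A, ⟪q a - p, ∑ b ∈ A.filter (fun b => b ≠ a),
        (G * m a * m b / ‖q b - q a‖ ^ 3) • (q b - q a)⟫
      = -(1/2) * ∑ a ∈ A, ∑ b ∈ A, (if a ≠ b then G * m a * m b / ‖q a - q b‖ else 0) := by
  set T : Fin N → Fin N → ℝ := fun a b =>
    if b ≠ a then (G * m a * m b / ‖q b - q a‖ ^ 3) * ⟪q a - p, q b - q a⟫ else 0 with hT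
  have expand : ∀ a, ⟪q a - p, ∑ b ∈ A.filter (fun b => b ≠ a),
      (G * m a * m b / ‖q b - q a‖ ^ 3) • (q b - q a)⟫ = ∑ b ∈ A, T a b := by
    intro a
    rw [inner_sum, Finset.sum_filter]
    refine Finset.sum_congr rfl (fun b _ => ?_)
    simp only [hT]
    split
    · rw [real_inner_smul_right]
    · rfl
  have pointwise : ∀ a ∈ A, ∀ b ∈ A, T a b + T b a
      = (if a ≠ b then -(G * m a * m b / ‖q a - q b‖) else 0) := by
    intro a _ b _
    by_cases hab : a = b
    · subst hab; simp [hT]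
    · have hz : q b - q a ≠ 0 := sub_ne_zero_of_ne (hq b a (Ne.symm hab))
      have hr : (0:ℝ) < ‖q b - q a‖ := norm_pos_iff.mpr hz
      have hrev : ‖q a - q b‖ = ‖q b - q a‖ := norm_sub_rev _ _
      have hinner : ⟪q a - p, q b - q a⟫ + ⟪q b - p, q a - q b⟫
          = -‖q b - q a‖ ^ 2 := by
        have e : q a - q b = -(q b - q a) := by abel
        rw [e, inner_neg_right, ← sub_eq_add_neg, ← inner_sub_left]
        have e2 : (q a - p) - (q b - p) = -(q b - q a) := by abel
        rw [e2, inner_neg_left, real_inner_self_eq_norm_sq]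
      simp only [hT, if_pos (Ne.symm hab : b ≠ a), if_pos (hab : a ≠ b), if_neg, hrev]
      have hne : ‖q b - q a‖ ≠ 0 := hr.ne'
      set r := ‖q b - q a‖ with hrdef
      set i1 : ℝ := ⟪q a - p, q b - q a⟫ with hi1
      set i2 : ℝ := ⟪q b - p, q a - q b⟫ with hi2
      have hsub : i2 = -r ^ 2 - i1 := by linarith [hinner]
      rw [hsub]
      field_simp
      ring
  have swap : ∑ a ∈ A, ∑ b ∈ A, T a b = ∑ a ∈ A, ∑ b ∈ A, T b a := Finset.sum_comm
  have h2 : (∑ a ∈ A, ∑ b ∈ A, T a b) + (∑ a ∈ A, ∑ b ∈ A, T a b)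
      = ∑ a ∈ A, ∑ b ∈ A, (T a b + T b a) := by
    nth_rewrite 2 [swap]
    rw [← Finset.sum_add_distrib]
    exact Finset.sum_congr rfl (fun a _ => (Finset.sum_add_distrib).symm)
  have h3 : ∑ a ∈ A, ∑ b ∈ A, (T a b + T b a)
      = -∑ a ∈ A, ∑ b ∈ A, (if a ≠ b then G * m a * m b / ‖q a - q b‖ else 0) := by
    rw [← Finset.sum_neg_distrib]
    refine Finset.sum_congr rfl (fun a ha => ?_)
    rw [← Finset.sum_neg_distrib]
    refine Finset.sum_congr rfl (fun b hb => ?_)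
    rw [pointwise a ha b hb]
    split <;> simp
  have hfin : ∑ a ∈ A, ⟪q a - p, ∑ b ∈ A.filter (fun b => b ≠ a),
      (G * m a * m b / ‖q b - q a‖ ^ 3) • (q b - q a)⟫ = ∑ a ∈ A, ∑ b ∈ A, T a b :=
    Finset.sum_congr rfl (fun a _ => expand a)
  rw [hfin]
  linarith [h2, h3]

-- The key static estimate: on {U ≥ h}, some body feels a force of size ≥ c.
set_option maxHeartbeats 1000000 in
lemma force_lower_bound {N : ℕ} (hN : 2 ≤ N) {G : ℝ} (hG : 0 < G) {m : Fin N → ℝ}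
    (hm : ∀ a, 0 < m a) {h : ℝ} (hh : 0 < h) :
    ∃ c > (0:ℝ), ∀ q : Config N, CollisionFree q → h ≤ potU G m q →
      ∃ a : Fin N, c ≤ ‖nbForce G m q a‖ := by
  have hNpos : 0 < N := by omega
  haveI : Nonempty (Fin N) := ⟨⟨0, hNpos⟩⟩
  have hNR : (2:ℝ) ≤ (N:ℝ) := by exact_mod_cast hN
  have hNR0 : (0:ℝ) < (N:ℝ) := by linarith
  set M : ℝ := ∑ a, m a with hM
  have hM0 : 0 < M := Finset.sum_pos (fun a _ => hm a) univ_nonempty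
  have hmM : ∀ a, m a ≤ M := fun a =>
    Finset.single_le_sum (f := m) (fun i _ => (hm i).le) (mem_univ a)
  set S : ℝ := 2 * (N:ℝ) + 1 with hS
  have hS1 : (1:ℝ) ≤ S := by simp only [hS]; linarith
  set R : ℝ := G * (N:ℝ)^2 * M^2 / h with hR
  have hR0 : 0 < R := by positivity
  set c : ℝ := h / (8 * (N:ℝ)^3 * (R * S^(N-1))) with hc
  have hc0 : 0 < c := by positivity
  refine ⟨c, hc0, ?_⟩
  intro q hq hU
  -- step 1: close pair
  obtain ⟨a0, b0, hab0, hpair⟩ := close_pair hN hG m hh q hU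
  have hq0 : q a0 ≠ q b0 := hq a0 b0 hab0
  have hr0 : (0:ℝ) < ‖q a0 - q b0‖ := norm_pos_iff.mpr (sub_ne_zero_of_ne hq0)
  have hrR : ‖q a0 - q b0‖ ≤ R := by
    have h2 : h / (N:ℝ)^2 * ‖q a0 - q b0‖ ≤ G * (m a0 * m b0) := by
      rw [show G * (m a0 * m b0 / ‖q a0 - q b0‖) = G * (m a0 * m b0) / ‖q a0 - q b0‖ by ring,
        le_div_iff₀ hr0] at hpair
      exact hpair
    have h3 : G * (m a0 * m b0) ≤ G * M^2 := by
      have := mul_le_mul (hmM a0) (hmM b0) (hm b0).le hM0.le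
      nlinarith
    have h2' : h * ‖q a0 - q b0‖ ≤ G * (m a0 * m b0) * (N:ℝ)^2 := by
      have step := mul_le_mul_of_nonneg_right h2 (by positivity : (0:ℝ) ≤ (N:ℝ)^2)
      calc h * ‖q a0 - q b0‖ = h / (N:ℝ)^2 * ‖q a0 - q b0‖ * (N:ℝ)^2 := by
            field_simp
        _ ≤ G * (m a0 * m b0) * (N:ℝ)^2 := step
    rw [hR, le_div_iff₀ hh]
    nlinarith [h2', h3, sq_nonneg (N:ℝ)]
  -- step 2: empty annulus around a0
  obtain ⟨j, hjN, hjber⟩ := annulus_empty hN hR0 hS1 (fun b => ‖q b - q a0‖) a0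
  set ℓ : ℝ := R * S^j with hℓ
  have hℓ0 : 0 < ℓ := by positivity
  have hRℓ : R ≤ ℓ := by
    rw [hℓ]; nth_rewrite 1 [show R = R * 1 by ring]
    exact mul_le_mul_of_nonneg_left (one_le_pow₀ hS1) hR0.le
  have hℓtop : ℓ ≤ R * S^(N-1) :=
    mul_le_mul_of_nonneg_left (pow_le_pow_right₀ hS1 (by omega)) hR0.le
  set A : Finset (Fin N) := univ.filter (fun b => ‖q b - q a0‖ ≤ ℓ) with hA
  have hmemA : ∀ b : Fin N, b ∈ A ↔ ‖q b - q a0‖ ≤ ℓ := by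
    intro b; simp [hA]
  have ha0A : a0 ∈ A := by rw [hmemA]; simp [hℓ0.le]
  have hb0A : b0 ∈ A := by rw [hmemA, norm_sub_rev]; linarith
  have hfar : ∀ b, b ∉ A → S * ℓ < ‖q b - q a0‖ := by
    intro b hb
    have hbℓ : ℓ < ‖q b - q a0‖ := by
      by_contra hle; exact hb ((hmemA b).mpr (not_lt.mp hle))
    have hbne : b ≠ a0 := by
      rintro rfl; simp only [sub_self, norm_zero] at hbℓ; linarith
    have := hjber b hbne
    rw [not_and] at this
    have h4 := this hbℓ
    rw [not_le] at h4
    calc S * ℓ = R * S^(j+1) := by rw [hℓ]; ring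
      _ < ‖q b - q a0‖ := h4
  -- step 3: Euler estimate inside the cluster A
  set F : Fin N → EuclideanSpace ℝ (Fin 3) := fun a =>
    ∑ b ∈ A.filter (fun b => b ≠ a), (G * m a * m b / ‖q b - q a‖ ^ 3) • (q b - q a) with hF
  set W : ℝ := ∑ a ∈ A, ∑ b ∈ A, (if a ≠ b then G * m a * m b / ‖q a - q b‖ else 0) with hW
  have hEuler : ∑ a ∈ A, ⟪q a - q a0, F a⟫ = -(1/2) * W :=
    euler_identity G m q hq A (q a0)
  have hWterm_nonneg : ∀ a ∈ A, ∀ b ∈ A,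
      (0:ℝ) ≤ (if a ≠ b then G * m a * m b / ‖q a - q b‖ else 0) := by
    intro a _ b _; split
    · exact div_nonneg (mul_nonneg (mul_nonneg hG.le (hm _).le) (hm _).le) (norm_nonneg _)
    · exact le_rfl
  have hWge : h / (N:ℝ)^2 ≤ W := by
    have hin : (if a0 ≠ b0 then G * m a0 * m b0 / ‖q a0 - q b0‖ else 0)
        ≤ ∑ b ∈ A, (if a0 ≠ b then G * m a0 * m b / ‖q a0 - q b‖ else 0) :=
      Finset.single_le_sum (fun b hb => hWterm_nonneg a0 ha0A b hb) hb0A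
    have hout : ∑ b ∈ A, (if a0 ≠ b then G * m a0 * m b / ‖q a0 - q b‖ else 0) ≤ W :=
      Finset.single_le_sum (f := fun a => ∑ b ∈ A, (if a ≠ b then G * m a * m b / ‖q a - q b‖ else 0))
        (fun a ha => Finset.sum_nonneg (fun b hb => hWterm_nonneg a ha b hb)) ha0A
    rw [if_pos hab0] at hin
    have : h / (N:ℝ)^2 ≤ G * m a0 * m b0 / ‖q a0 - q b0‖ := by
      calc h / (N:ℝ)^2 ≤ G * (m a0 * m b0 / ‖q a0 - q b0‖) := hpair
        _ = G * m a0 * m b0 / ‖q a0 - q b0‖ := by ring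
    linarith
  -- bound the sum of forces from below
  have hsumF : h / (2 * (N:ℝ)^2) ≤ ℓ * ∑ a ∈ A, ‖F a‖ := by
    have h5 : (1/2) * W = ∑ a ∈ A, -⟪q a - q a0, F a⟫ := by
      rw [Finset.sum_neg_distrib]; linarith [hEuler]
    have h6 : ∑ a ∈ A, -⟪q a - q a0, F a⟫ ≤ ∑ a ∈ A, ℓ * ‖F a‖ := by
      apply Finset.sum_le_sum
      intro a ha
      calc -⟪q a - q a0, F a⟫ ≤ |⟪q a - q a0, F a⟫| := neg_le_abs _
        _ ≤ ‖q a - q a0‖ * ‖F a‖ := abs_real_inner_le_norm _ _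
        _ ≤ ℓ * ‖F a‖ := by
            apply mul_le_mul_of_nonneg_right ((hmemA a).mp ha) (norm_nonneg _)
    rw [← Finset.mul_sum] at h6
    calc h / (2 * (N:ℝ)^2) = (1/2) * (h / (N:ℝ)^2) := by ring
      _ ≤ (1/2) * W := by linarith [hWge]
      _ = ∑ a ∈ A, -⟪q a - q a0, F a⟫ := h5
      _ ≤ ℓ * ∑ a ∈ A, ‖F a‖ := h6
  -- pick the body with maximal cluster force
  obtain ⟨a1, ha1A, hmax⟩ := A.exists_max_image (fun a => ‖F a‖) ⟨a0, ha0A⟩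
  have hFa1 : h / (4 * (N:ℝ)^3 * ℓ) ≤ ‖F a1‖ := by
    have h7 : ∑ a ∈ A, ‖F a‖ ≤ (N:ℝ) * ‖F a1‖ := by
      calc ∑ a ∈ A, ‖F a‖ ≤ ∑ _a ∈ A, ‖F a1‖ := Finset.sum_le_sum hmax
        _ = (A.card : ℝ) * ‖F a1‖ := by rw [Finset.sum_const, nsmul_eq_mul]
        _ ≤ (N:ℝ) * ‖F a1‖ := by
            apply mul_le_mul_of_nonneg_right _ (norm_nonneg _)
            have hcard := Finset.card_le_univ A
            calc ((A.card : ℕ) : ℝ) ≤ ((Fintype.card (Fin N) : ℕ) : ℝ) := by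
                  exact_mod_cast hcard
              _ = (N:ℝ) := by rw [Fintype.card_fin]
    have h8 : h / (2 * (N:ℝ)^2) ≤ ℓ * ((N:ℝ) * ‖F a1‖) := by
      calc h / (2 * (N:ℝ)^2) ≤ ℓ * ∑ a ∈ A, ‖F a‖ := hsumF
        _ ≤ ℓ * ((N:ℝ) * ‖F a1‖) := mul_le_mul_of_nonneg_left h7 hℓ0.le
    rw [div_le_iff₀ (by positivity)]
    calc h = (h / (2 * (N:ℝ)^2)) * (2 * (N:ℝ)^2) := by field_simp
      _ ≤ (ℓ * ((N:ℝ) * ‖F a1‖)) * (2 * (N:ℝ)^2) := by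
          apply mul_le_mul_of_nonneg_right h8 (by positivity)
      _ ≤ ‖F a1‖ * (4 * (N:ℝ)^3 * ℓ) := by
          have hnn : (0:ℝ) ≤ (N:ℝ)^3 * ℓ * ‖F a1‖ := by positivity
          nlinarith [hnn]
  -- step 4: external forces are small
  have ha1ℓ : ‖q a1 - q a0‖ ≤ ℓ := (hmemA a1).mp ha1A
  set ext : EuclideanSpace ℝ (Fin 3) :=
    ∑ b ∈ (univ.filter (fun b => b ≠ a1)).filter (fun b => ¬ b ∈ A),
      (G * m a1 * m b / ‖q b - q a1‖ ^ 3) • (q b - q a1) with hext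
  have hsplit : nbForce G m q a1 = F a1 + ext := by
    have hFa : F a1 = ∑ b ∈ (univ.filter (fun b => b ≠ a1)).filter (fun b => b ∈ A),
        (G * m a1 * m b / ‖q b - q a1‖ ^ 3) • (q b - q a1) := by
      rw [hF]
      refine Finset.sum_congr ?_ (fun _ _ => rfl)
      ext b
      simp only [hA, Finset.mem_filter, Finset.mem_univ, true_and]
      tauto
    rw [hFa, hext, nbForce]
    exact (Finset.sum_filter_add_sum_filter_not _ _ _).symm
  have hrfarbound : ∀ b, b ≠ a1 → b ∉ A → 2*(N:ℝ)*ℓ ≤ ‖q b - q a1‖ := by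
    intro b hba1 hbA
    have h9 : S * ℓ < ‖q b - q a0‖ := hfar b hbA
    have h10 : ‖q b - q a0‖ - ‖q a1 - q a0‖ ≤ ‖q b - q a1‖ := by
      have step := norm_sub_norm_le (q b - q a0) (q a1 - q a0)
      have e : (q b - q a0) - (q a1 - q a0) = q b - q a1 := by abel
      rw [e] at step
      exact step
    have hSe : S * ℓ = 2*(N:ℝ)*ℓ + ℓ := by rw [hS]; ring
    linarith
  have hextbound : ‖ext‖ ≤ G * M * M / (2*(N:ℝ)*ℓ)^2 := by
    rw [hext]
    calc ‖∑ b ∈ (univ.filter (fun b => b ≠ a1)).filter (fun b => ¬ b ∈ A),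
          (G * m a1 * m b / ‖q b - q a1‖ ^ 3) • (q b - q a1)‖
        ≤ ∑ b ∈ (univ.filter (fun b => b ≠ a1)).filter (fun b => ¬ b ∈ A),
          ‖(G * m a1 * m b / ‖q b - q a1‖ ^ 3) • (q b - q a1)‖ := norm_sum_le _ _
      _ ≤ ∑ b ∈ (univ.filter (fun b => b ≠ a1)).filter (fun b => ¬ b ∈ A),
          (G * M / (2*(N:ℝ)*ℓ)^2) * m b := by
          apply Finset.sum_le_sum
          intro b hb
          simp only [Finset.mem_filter, Finset.mem_univ, true_and] at hb
          obtain ⟨hba1, hbA⟩ := hb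
          have hrlow := hrfarbound b hba1 hbA
          have hrpos : (0:ℝ) < ‖q b - q a1‖ := lt_of_lt_of_le (by positivity) hrlow
          have hcoefnn : (0:ℝ) ≤ G * m a1 * m b / ‖q b - q a1‖ ^ 3 :=
            div_nonneg (mul_nonneg (mul_nonneg hG.le (hm _).le) (hm _).le) (by positivity)
          rw [norm_smul, Real.norm_eq_abs, abs_of_nonneg hcoefnn]
          have e : G * m a1 * m b / ‖q b - q a1‖ ^ 3 * ‖q b - q a1‖
              = G * m a1 * m b / ‖q b - q a1‖ ^ 2 := by
            field_simp
          rw [e, show (G * M / (2*(N:ℝ)*ℓ)^2) * m b = G * M * m b / (2*(N:ℝ)*ℓ)^2 by ring]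
          have h2N : (0:ℝ) < 2*(N:ℝ)*ℓ := by
            have := mul_pos (mul_pos (by norm_num : (0:ℝ) < 2) hNR0) hℓ0
            linarith
          apply div_le_div₀ (mul_nonneg (mul_nonneg hG.le hM0.le) (hm b).le) _
            (pow_pos h2N 2) (by nlinarith [hrlow, h2N])
          have hma1 := hmM a1
          nlinarith [mul_nonneg (mul_nonneg (sub_nonneg.mpr hma1) hG.le) (hm b).le]
      _ ≤ ∑ b : Fin N, (G * M / (2*(N:ℝ)*ℓ)^2) * m b := by
          apply Finset.sum_le_sum_of_subset_of_nonneg (Finset.filter_subset _ _ |>.trans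
            (Finset.filter_subset _ _))
          intro b _ _
          have h2N : (0:ℝ) < 2*(N:ℝ)*ℓ := by
            have := mul_pos (mul_pos (by norm_num : (0:ℝ) < 2) hNR0) hℓ0
            linarith
          exact mul_nonneg (div_nonneg (mul_nonneg hG.le hM0.le) (pow_pos h2N 2).le) (hm b).le
      _ = (G * M / (2*(N:ℝ)*ℓ)^2) * M := by rw [← Finset.mul_sum, hM]
      _ = G * M * M / (2*(N:ℝ)*ℓ)^2 := by ring
  have hext_small : G * M * M / (2*(N:ℝ)*ℓ)^2 ≤ h / (8 * (N:ℝ)^3 * ℓ) := by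
    have hhR : h * R = G * (N:ℝ)^2 * M^2 := by rw [hR]; field_simp
    have hhℓ : 2*(N:ℝ)*(G*M^2) ≤ h * ℓ := by
      calc 2*(N:ℝ)*(G*M^2) ≤ (N:ℝ)^2*(G*M^2) := by
            have h2NN : 2*(N:ℝ) ≤ (N:ℝ)^2 := by nlinarith [hNR]
            exact mul_le_mul_of_nonneg_right h2NN (mul_nonneg hG.le (sq_nonneg M))
        _ = h * R := by rw [hhR]; ring
        _ ≤ h * ℓ := mul_le_mul_of_nonneg_left hRℓ hh.le
    have h2N : (0:ℝ) < 2*(N:ℝ)*ℓ := by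
      have := mul_pos (mul_pos (by norm_num : (0:ℝ) < 2) hNR0) hℓ0
      linarith
    have h8N : (0:ℝ) < 8*(N:ℝ)^3*ℓ := by
      have := mul_pos (mul_pos (by norm_num : (0:ℝ) < 8) (pow_pos hNR0 3)) hℓ0
      linarith
    rw [div_le_div_iff₀ (pow_pos h2N 2) h8N]
    have h4nn : (0:ℝ) ≤ 4*(N:ℝ)^2*ℓ :=
      (mul_pos (mul_pos (by norm_num : (0:ℝ) < 4) (pow_pos hNR0 2)) hℓ0).le
    nlinarith [hhℓ, hℓ0, hNR0, hh.le, mul_le_mul_of_nonneg_right hhℓ h4nn]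
  have hlower : h / (8 * (N:ℝ)^3 * ℓ) ≤ ‖nbForce G m q a1‖ := by
    have h11 : ‖F a1‖ ≤ ‖F a1 + ext‖ + ‖ext‖ := by
      calc ‖F a1‖ = ‖(F a1 + ext) - ext‖ := by rw [add_sub_cancel_right]
        _ ≤ ‖F a1 + ext‖ + ‖ext‖ := norm_sub_le _ _
    rw [hsplit]
    have e48 : h / (4 * (N:ℝ)^3 * ℓ) - h / (8 * (N:ℝ)^3 * ℓ) = h / (8 * (N:ℝ)^3 * ℓ) := by
      field_simp
      ring
    linarith [hFa1, hextbound, hext_small, h11]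
  refine ⟨a1, le_trans ?_ hlower⟩
  rw [hc]
  have h8N : (0:ℝ) < 8*(N:ℝ)^3*ℓ := by
    have := mul_pos (mul_pos (by norm_num : (0:ℝ) < 8) (pow_pos hNR0 3)) hℓ0
    linarith
  apply div_le_div_of_nonneg_left hh.le h8N
  nlinarith [hℓtop, pow_pos hNR0 3]

lemma pair_le_potU {N : ℕ} {G : ℝ} (hG : 0 < G) {m : Fin N → ℝ} (hm : ∀ a, 0 < m a)
    (q : Config N) {a b : Fin N} (hab : a ≠ b) :
    G * (m a * m b / ‖q a - q b‖) ≤ potU G m q := by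
  unfold potU
  apply mul_le_mul_of_nonneg_left _ hG.le
  have hnn : ∀ x y : Fin N, 0 ≤ (if x < y then m x * m y / ‖q x - q y‖ else 0) := by
    intro x y; split
    · exact div_nonneg (mul_nonneg (hm x).le (hm y).le) (norm_nonneg _)
    · exact le_rfl
  rcases hab.lt_or_gt with hlt | hlt
  · calc m a * m b / ‖q a - q b‖
        = (if a < b then m a * m b / ‖q a - q b‖ else 0) := by rw [if_pos hlt]
      _ ≤ ∑ y, (if a < y then m a * m y / ‖q a - q y‖ else 0) :=
          Finset.single_le_sum (fun y _ => hnn a y) (mem_univ b)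
      _ ≤ ∑ x, ∑ y, (if x < y then m x * m y / ‖q x - q y‖ else 0) :=
          Finset.single_le_sum
            (f := fun x => ∑ y, (if x < y then m x * m y / ‖q x - q y‖ else 0))
            (fun x _ => Finset.sum_nonneg (fun y _ => hnn x y)) (mem_univ a)
  · calc m a * m b / ‖q a - q b‖
        = (if b < a then m b * m a / ‖q b - q a‖ else 0) := by
          rw [if_pos hlt, norm_sub_rev, mul_comm (m b)]
      _ ≤ ∑ y, (if b < y then m b * m y / ‖q b - q y‖ else 0) :=
          Finset.single_le_sum (fun y _ => hnn b y) (mem_univ a)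
      _ ≤ ∑ x, ∑ y, (if x < y then m x * m y / ‖q x - q y‖ else 0) :=
          Finset.single_le_sum
            (f := fun x => ∑ y, (if x < y then m x * m y / ‖q x - q y‖ else 0))
            (fun x _ => Finset.sum_nonneg (fun y _ => hnn x y)) (mem_univ b)

lemma nbForce_lip {N : ℕ} {G : ℝ} (hG : 0 < G) {m : Fin N → ℝ} (hm : ∀ a, 0 < m a)
    {δ : ℝ} (hδ : 0 < δ) (q q' : Config N)
    (hq : ∀ a b, a ≠ b → δ ≤ ‖q a - q b‖) (hq' : ∀ a b, a ≠ b → δ ≤ ‖q' a - q' b‖)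
    {d : ℝ} (hd : 0 ≤ d) (hqq : ∀ b, ‖q b - q' b‖ ≤ d) (a : Fin N) :
    ‖nbForce G m q a - nbForce G m q' a‖ ≤ (8 * G * (∑ b, m b)^2 / δ^3) * d := by
  set M : ℝ := ∑ b, m b with hM
  have hM0 : 0 < M := Finset.sum_pos (fun b _ => hm b) ⟨a, mem_univ a⟩
  have hmM : ∀ b, m b ≤ M := fun b =>
    Finset.single_le_sum (f := m) (fun i _ => (hm i).le) (mem_univ b)
  rw [nbForce, nbForce, ← Finset.sum_sub_distrib]
  have hterm : ∀ b ∈ univ.filter (fun b => b ≠ a),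
      ‖(G * m a * m b / ‖q b - q a‖ ^ 3) • (q b - q a)
        - (G * m a * m b / ‖q' b - q' a‖ ^ 3) • (q' b - q' a)‖
      ≤ (8 * G * M / δ^3 * d) * m b := by
    intro b hb
    have hba : b ≠ a := by simpa using hb
    have hx : δ ≤ ‖q b - q a‖ := hq b a hba
    have hx' : δ ≤ ‖q' b - q' a‖ := hq' b a hba
    have e1 : (G * m a * m b / ‖q b - q a‖ ^ 3) • (q b - q a)
        = (G * m a * m b) • ((‖q b - q a‖ ^ 3)⁻¹ • (q b - q a)) := by
      rw [smul_smul, div_eq_mul_inv]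
    have e2 : (G * m a * m b / ‖q' b - q' a‖ ^ 3) • (q' b - q' a)
        = (G * m a * m b) • ((‖q' b - q' a‖ ^ 3)⁻¹ • (q' b - q' a)) := by
      rw [smul_smul, div_eq_mul_inv]
    rw [e1, e2, ← smul_sub, norm_smul, Real.norm_eq_abs,
      abs_of_nonneg (mul_nonneg (mul_nonneg hG.le (hm a).le) (hm b).le)]
    have hlip := inv_cube_smul_lip hδ hx hx'
    have hdiff : ‖(q b - q a) - (q' b - q' a)‖ ≤ 2 * d := by
      have e3 : (q b - q a) - (q' b - q' a) = (q b - q' b) - (q a - q' a) := by abel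
      rw [e3]
      calc ‖(q b - q' b) - (q a - q' a)‖ ≤ ‖q b - q' b‖ + ‖q a - q' a‖ := norm_sub_le _ _
        _ ≤ 2 * d := by linarith [hqq b, hqq a]
    calc G * m a * m b * ‖(‖q b - q a‖ ^ 3)⁻¹ • (q b - q a)
          - (‖q' b - q' a‖ ^ 3)⁻¹ • (q' b - q' a)‖
        ≤ G * m a * m b * (4 / δ^3 * ‖(q b - q a) - (q' b - q' a)‖) := by
          apply mul_le_mul_of_nonneg_left hlip
            (mul_nonneg (mul_nonneg hG.le (hm a).le) (hm b).le)
      _ ≤ G * m a * m b * (4 / δ^3 * (2*d)) := by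
          apply mul_le_mul_of_nonneg_left _
            (mul_nonneg (mul_nonneg hG.le (hm a).le) (hm b).le)
          exact mul_le_mul_of_nonneg_left hdiff (by positivity)
      _ = (8 * G * (m a) / δ^3 * d) * m b := by ring
      _ ≤ (8 * G * M / δ^3 * d) * m b := by
          apply mul_le_mul_of_nonneg_right _ (hm b).le
          have h1 : (0:ℝ) ≤ 8 * G / δ^3 * d := by positivity
          have := hmM a
          calc 8 * G * (m a) / δ^3 * d = (8 * G / δ^3 * d) * m a := by ring
            _ ≤ (8 * G / δ^3 * d) * M := mul_le_mul_of_nonneg_left this h1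
            _ = 8 * G * M / δ^3 * d := by ring
  calc ‖∑ b ∈ univ.filter (fun b => b ≠ a),
        ((G * m a * m b / ‖q b - q a‖ ^ 3) • (q b - q a)
          - (G * m a * m b / ‖q' b - q' a‖ ^ 3) • (q' b - q' a))‖
      ≤ ∑ b ∈ univ.filter (fun b => b ≠ a),
        ‖(G * m a * m b / ‖q b - q a‖ ^ 3) • (q b - q a)
          - (G * m a * m b / ‖q' b - q' a‖ ^ 3) • (q' b - q' a)‖ := norm_sum_le _ _
    _ ≤ ∑ b ∈ univ.filter (fun b => b ≠ a), (8 * G * M / δ^3 * d) * m b :=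
        Finset.sum_le_sum hterm
    _ ≤ ∑ b : Fin N, (8 * G * M / δ^3 * d) * m b := by
        apply Finset.sum_le_sum_of_subset_of_nonneg (Finset.filter_subset _ _)
        intro b _ _
        exact mul_nonneg (by positivity) (hm b).le
    _ = (8 * G * M / δ^3 * d) * M := by rw [← Finset.mul_sum]
    _ = (8 * G * M^2 / δ^3) * d := by ring

set_option maxHeartbeats 1000000

/-- Hill collar: for fixed `h > 0` there are `ε > 0` and `τ > 0`
such that no energy `-h` solution can remain in the collar region
`{h ≤ U ≤ h + ε}` for a time interval of length `τ`: any such solution leaves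
the collar within time `τ`. -/
theorem hill_collar
    (N : ℕ) (hN : 2 ≤ N) (G : ℝ) (hG : 0 < G)
    (m : Fin N → ℝ) (hm : ∀ a, 0 < m a)
    (h : ℝ) (hh : 0 < h) :
    ∃ ε > (0:ℝ), ∃ τ > (0:ℝ),
      ∀ (J : Set ℝ) (q v : ℝ → Config N),
        IsSolutionOn G m J q v →
        (∀ t ∈ J, kinE m (v t) - potU G m (q t) = -h) →
        ∀ t₀ : ℝ, Set.Icc t₀ (t₀ + τ) ⊆ J →
          ∃ t ∈ Set.Icc t₀ (t₀ + τ),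
            ¬ (h ≤ potU G m (q t) ∧ potU G m (q t) ≤ h + ε) := by
  obtain ⟨c, hc0, hforce⟩ := force_lower_bound hN hG hm hh
  have hNpos : 0 < N := by omega
  haveI : Nonempty (Fin N) := ⟨⟨0, hNpos⟩⟩
  set M : ℝ := ∑ a, m a with hM
  have hM0 : 0 < M := Finset.sum_pos (fun b _ => hm b) univ_nonempty
  have hmM : ∀ b, m b ≤ M := fun b =>
    Finset.single_le_sum (f := m) (fun i _ => (hm i).le) (mem_univ b)
  set μ : ℝ := univ.inf' univ_nonempty m with hμ
  have hμle : ∀ a, μ ≤ m a := fun a => Finset.inf'_le m (mem_univ a)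
  have hμ0 : 0 < μ := by
    obtain ⟨a₀, -, hμa⟩ := Finset.exists_mem_eq_inf' univ_nonempty m
    rw [hμ, hμa]; exact hm a₀
  set δ : ℝ := G * μ^2 / (2*h) with hδdef
  have hδ0 : 0 < δ := div_pos (mul_pos hG (pow_pos hμ0 2)) (by linarith)
  set C : ℝ := 8 * G * M^2 / δ^3 with hC
  have hC0 : 0 < C := div_pos (mul_pos (mul_pos (by norm_num) hG) (pow_pos hM0 2))
    (pow_pos hδ0 3)
  set B : ℝ := M * (2 + C/μ) with hB
  have hB0 : 0 < B := mul_pos hM0 (by positivity)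
  set ε : ℝ := min h (μ * c^2 / (2 * (B+1)^2)) with hε
  have hε0 : 0 < ε := lt_min hh (by positivity)
  refine ⟨ε, hε0, 1, one_pos, ?_⟩
  intro J q v hsol henergy t₀ hsub
  by_contra hcon
  push_neg at hcon
  set s : ℝ := Real.sqrt (2*ε/μ) with hs
  have hs0 : (0:ℝ) ≤ s := Real.sqrt_nonneg _
  have ht₀mem : t₀ ∈ Set.Icc t₀ (t₀+1) := Set.mem_Icc.mpr ⟨le_refl _, by linarith⟩
  have hJ : ∀ t ∈ Set.Icc t₀ (t₀+1), t ∈ J := fun t ht => hsub ht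
  -- collar membership
  have hcollar : ∀ t ∈ Set.Icc t₀ (t₀+1),
      h ≤ potU G m (q t) ∧ potU G m (q t) ≤ h + ε := by
    intro t ht
    exact hcon t ht
  -- kinetic energy small
  have hK : ∀ t ∈ Set.Icc t₀ (t₀+1), kinE m (v t) ≤ ε := by
    intro t ht
    have hE := henergy t (hJ t ht)
    have := (hcollar t ht).2
    linarith
  -- velocities small
  have hv : ∀ t ∈ Set.Icc t₀ (t₀+1), ∀ a, ‖v t a‖ ≤ s := by
    intro t ht a
    have h2 : m a * ‖v t a‖^2 ≤ ∑ b, m b * ‖v t b‖^2 :=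
      Finset.single_le_sum (f := fun b => m b * ‖v t b‖^2)
        (fun b _ => mul_nonneg (hm b).le (sq_nonneg _)) (mem_univ a)
    have h1 : m a * ‖v t a‖^2 ≤ 2 * ε := by
      have hKt := hK t ht
      unfold kinE at hKt
      linarith
    have h3 : ‖v t a‖^2 ≤ 2*ε/μ := by
      rw [le_div_iff₀ hμ0]
      calc ‖v t a‖^2 * μ ≤ ‖v t a‖^2 * m a :=
            mul_le_mul_of_nonneg_left (hμle a) (sq_nonneg _)
        _ = m a * ‖v t a‖^2 := by ring
        _ ≤ 2*ε := h1
    calc ‖v t a‖ = Real.sqrt (‖v t a‖^2) := (Real.sqrt_sq (norm_nonneg _)).symm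
      _ ≤ s := by rw [hs]; exact Real.sqrt_le_sqrt h3
  -- mutual distances bounded below
  have hεh : ε ≤ h := min_le_left _ _
  have hdist : ∀ t ∈ Set.Icc t₀ (t₀+1), ∀ a b : Fin N, a ≠ b → δ ≤ ‖q t a - q t b‖ := by
    intro t ht a b hab
    obtain ⟨hCF, -, -⟩ := hsol t (hJ t ht)
    have hrpos : 0 < ‖q t a - q t b‖ :=
      norm_pos_iff.mpr (sub_ne_zero_of_ne (hCF a b hab))
    have hterm : G * (m a * m b / ‖q t a - q t b‖) ≤ potU G m (q t) :=
      pair_le_potU hG hm (q t) hab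
    have hU2h : potU G m (q t) ≤ 2*h := by
      have := (hcollar t ht).2; linarith
    have hkey : G * (m a * m b) ≤ 2*h*‖q t a - q t b‖ := by
      have e : G * (m a * m b / ‖q t a - q t b‖) = G * (m a * m b) / ‖q t a - q t b‖ := by
        ring
      rw [e, div_le_iff₀ hrpos] at hterm
      calc G * (m a * m b) ≤ potU G m (q t) * ‖q t a - q t b‖ := hterm
        _ ≤ 2*h*‖q t a - q t b‖ := mul_le_mul_of_nonneg_right hU2h hrpos.le
    rw [hδdef, div_le_iff₀ (by linarith : (0:ℝ) < 2*h)]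
    have hμμ : G * μ^2 ≤ G * (m a * m b) := by
      have := mul_le_mul (hμle a) (hμle b) hμ0.le (hm a).le
      nlinarith [hG.le]
    calc G * μ^2 ≤ G * (m a * m b) := hμμ
      _ ≤ 2*h*‖q t a - q t b‖ := hkey
      _ = ‖q t a - q t b‖ * (2*h) := by ring
  -- displacement bound
  have hdisp : ∀ t ∈ Set.Icc t₀ (t₀+1), ∀ a, ‖q t a - q t₀ a‖ ≤ s := by
    intro t ht a
    have key := norm_image_sub_le_of_norm_deriv_le_segment'
      (f := fun u => q u a) (f' := fun u => v u a) (a := t₀) (b := t₀+1) (C := s)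
      (fun u hu => ((hsol u (hJ u hu)).2.1 a).hasDerivWithinAt)
      (fun u hu => hv u (Set.Ico_subset_Icc_self hu) a) t ht
    have h1 : t - t₀ ≤ 1 := by have := ht.2; linarith
    have h0 : 0 ≤ t - t₀ := by have := ht.1; linarith
    calc ‖q t a - q t₀ a‖ ≤ s * (t - t₀) := key
      _ ≤ s * 1 := mul_le_mul_of_nonneg_left h1 hs0
      _ = s := mul_one s
  -- the static force bound at time t₀
  obtain ⟨hCF₀, -, -⟩ := hsol t₀ (hJ t₀ ht₀mem)
  obtain ⟨a, hca⟩ := hforce (q t₀) hCF₀ (hcollar t₀ ht₀mem).1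
  -- force varies little along the solution
  have hFlip : ∀ t ∈ Set.Icc t₀ (t₀+1),
      ‖nbForce G m (q t) a - nbForce G m (q t₀) a‖ ≤ C * s := by
    intro t ht
    have := nbForce_lip hG hm hδ0 (q t) (q t₀) (hdist t ht) (hdist t₀ ht₀mem)
      hs0 (fun b => hdisp t ht b) a
    calc ‖nbForce G m (q t) a - nbForce G m (q t₀) a‖
        ≤ (8 * G * (∑ b, m b)^2 / δ^3) * s := this
      _ = C * s := by rw [hC, hM]
  -- acceleration equals the force over mass
  have hacc : ∀ t ∈ Set.Icc t₀ (t₀+1),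
      HasDerivAt (fun u => v u a) ((m a)⁻¹ • nbForce G m (q t) a) t := by
    intro t ht
    obtain ⟨-, -, h3⟩ := hsol t (hJ t ht)
    obtain ⟨acc, hda, heq⟩ := h3 a
    have hFacc : nbForce G m (q t) a = m a • acc := by
      rw [nbForce]; exact heq.symm
    have : (m a)⁻¹ • nbForce G m (q t) a = acc := by
      rw [hFacc, smul_smul, inv_mul_cancel₀ (hm a).ne', one_smul]
    rwa [this]
  set w : EuclideanSpace ℝ (Fin 3) := (m a)⁻¹ • nbForce G m (q t₀) a with hw
  set g : ℝ → EuclideanSpace ℝ (Fin 3) := fun u => v u a - u • w with hg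
  have hgderiv : ∀ t ∈ Set.Icc t₀ (t₀+1),
      HasDerivWithinAt g ((m a)⁻¹ • nbForce G m (q t) a - w) (Set.Icc t₀ (t₀+1)) t := by
    intro t ht
    have h1 : HasDerivAt (fun u : ℝ => u • w) ((1:ℝ) • w) t :=
      (hasDerivAt_id t).smul_const w
    rw [one_smul] at h1
    exact ((hacc t ht).sub h1).hasDerivWithinAt
  have hgbound : ∀ t ∈ Set.Ico t₀ (t₀+1),
      ‖(m a)⁻¹ • nbForce G m (q t) a - w‖ ≤ C/μ * s := by
    intro t ht
    have ht' : t ∈ Set.Icc t₀ (t₀+1) := Set.Ico_subset_Icc_self ht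
    have e : (m a)⁻¹ • nbForce G m (q t) a - w
        = (m a)⁻¹ • (nbForce G m (q t) a - nbForce G m (q t₀) a) := by
      rw [hw, smul_sub]
    rw [e, norm_smul, Real.norm_eq_abs, abs_of_pos (inv_pos.mpr (hm a))]
    calc (m a)⁻¹ * ‖nbForce G m (q t) a - nbForce G m (q t₀) a‖
        ≤ (m a)⁻¹ * (C * s) :=
          mul_le_mul_of_nonneg_left (hFlip t ht') (inv_pos.mpr (hm a)).le
      _ ≤ μ⁻¹ * (C * s) := by
          apply mul_le_mul_of_nonneg_right _ (mul_nonneg hC0.le hs0)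
          exact inv_anti₀ hμ0 (hμle a)
      _ = C/μ * s := by ring
  have hseg := norm_image_sub_le_of_norm_deriv_le_segment' hgderiv hgbound (t₀+1)
    (Set.right_mem_Icc.mpr (by linarith))
  have hsegval : ‖g (t₀+1) - g t₀‖ ≤ C/μ * s := by
    calc ‖g (t₀+1) - g t₀‖ ≤ C/μ * s * (t₀ + 1 - t₀) := hseg
      _ = C/μ * s := by ring_nf
  have hgdiff : g (t₀+1) - g t₀ = (v (t₀+1) a - v t₀ a) - w := by
    simp only [hg]
    have e : (t₀ + 1) • w = t₀ • w + w := by rw [add_smul, one_smul]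
    rw [e]; abel
  have hwnorm : ‖w‖ ≤ C/μ * s + 2*s := by
    have e : w = (v (t₀+1) a - v t₀ a) - (g (t₀+1) - g t₀) := by rw [hgdiff]; abel
    rw [e]
    have hv1 : ‖v (t₀+1) a‖ ≤ s := hv (t₀+1) (Set.right_mem_Icc.mpr (by linarith)) a
    have hv0 : ‖v t₀ a‖ ≤ s := hv t₀ ht₀mem a
    calc ‖(v (t₀+1) a - v t₀ a) - (g (t₀+1) - g t₀)‖
        ≤ ‖v (t₀+1) a - v t₀ a‖ + ‖g (t₀+1) - g t₀‖ := norm_sub_le _ _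
      _ ≤ (‖v (t₀+1) a‖ + ‖v t₀ a‖) + C/μ * s := by
          have := norm_sub_le (v (t₀+1) a) (v t₀ a)
          linarith [hsegval]
      _ ≤ C/μ * s + 2*s := by linarith
  have hFnorm : ‖nbForce G m (q t₀) a‖ ≤ B * s := by
    have e : nbForce G m (q t₀) a = m a • w := by
      rw [hw, smul_smul, mul_inv_cancel₀ (hm a).ne', one_smul]
    rw [e, norm_smul, Real.norm_eq_abs, abs_of_pos (hm a)]
    calc m a * ‖w‖ ≤ M * (C/μ * s + 2*s) :=
          mul_le_mul (hmM a) hwnorm (norm_nonneg _) hM0.le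
      _ = B * s := by rw [hB]; ring
  -- final contradiction
  have hsle : s ≤ c/(B+1) := by
    have hεle : ε ≤ μ * c^2 / (2 * (B+1)^2) := min_le_right _ _
    have h1 : 2*ε/μ ≤ (c/(B+1))^2 := by
      rw [div_le_iff₀ hμ0, div_pow, div_mul_eq_mul_div, le_div_iff₀ (by positivity)]
      calc 2*ε*(B+1)^2 ≤ 2*(μ * c^2 / (2 * (B+1)^2))*(B+1)^2 := by
            apply mul_le_mul_of_nonneg_right _ (by positivity)
            linarith
        _ = c^2 * μ := by field_simp
    calc s = Real.sqrt (2*ε/μ) := rfl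
      _ ≤ Real.sqrt ((c/(B+1))^2) := Real.sqrt_le_sqrt h1
      _ = c/(B+1) := Real.sqrt_sq (by positivity)
  have hBs : B * s < c := by
    calc B * s ≤ B * (c/(B+1)) := mul_le_mul_of_nonneg_left hsle hB0.le
      _ < c := by
          rw [mul_div_assoc', div_lt_iff₀ (by linarith)]
          nlinarith [hc0, hB0]
  linarith [hca, hFnorm, hBs]
end
end
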